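/- arXiv:2307.14033 — 2 statements merged into one kernel-verified Lean document; each statement's English description precedes it below -/
import Mathlib

section
/- In the grid G = P₅ □ Pₘ with columns V₁, …, Vₘ (each of size 5), any minimum 3-percolating set S that contains no three consecutive boundary vertices satisfies |S ∩ V₁| ≥ 3, |S ∩ (V₁ ∪ V₂)| ≥ 5, |S ∩ Vₘ| ≥ 3, and |S ∩ (Vₘ₋₁ ∪ Vₘ)| ≥ 5. -/
open SimpleGraph

/-- The set of vertices eventually infected in `r`-neighbor bootstrap percolation
on the graph `G`, starting from the initially infected set `A`. -/
inductive Infected {V : Type*} (G : SimpleGraph V) (r : ℕ) (A : Set V) : V → Prop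
  | init {v : V} : v ∈ A → Infected G r A v
  | step {v : V} (T : Finset V) : r ≤ T.card → (∀ u ∈ T, G.Adj u v) →
      (∀ u ∈ T, Infected G r A u) → Infected G r A v

/-- `A` is an `r`-percolating set of `G`. -/
def Percolates {V : Type*} (G : SimpleGraph V) (r : ℕ) (A : Set V) : Prop :=
  ∀ v, Infected G r A v

/-- The `r`-percolation number of `G`: minimum size of an `r`-percolating set. -/
noncomputable def percNum (V : Type*) [Fintype V] (G : SimpleGraph V) (r : ℕ) : ℕ :=
  sInf {k | ∃ A : Finset V, A.card = k ∧ Percolates G r (↑A)}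

/-- The `n × m` grid graph `Pₙ □ Pₘ`. -/
def gridGraph (n m : ℕ) : SimpleGraph (Fin n × Fin m) :=
  (pathGraph n) □ (pathGraph m)

/-- A boundary vertex of a grid: degree at most 3. -/
def IsBoundary {V : Type*} (G : SimpleGraph V) (v : V) : Prop :=
  (G.neighborSet v).ncard ≤ 3

/-!
A vertex in the first two columns of `P₅ □ Pₘ` has at most one neighbour outside the first three
columns, so restricting the process to `P₅ □ P₃` with its last column infected from the start
still percolates. The infection never leaves a closed set (one with no outside vertex having three
neighbours in it), so a percolating set meets the complement of every closed set not containing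
all vertices. In `P₅ □ P₃` with the last column frozen, three disjoint such complements lie in the
first column, and nine of them cover every vertex of the first two columns at most twice, which
gives `2 |S ∩ (V₁ ∪ V₂)| ≥ 9`. The last two columns are handled by the reflected embedding.
-/

open Finset

theorem gridGraph_adj {n m : ℕ} {x y : Fin n × Fin m} :
    (gridGraph n m).Adj x y ↔
      ((x.1 : ℕ) + 1 = y.1 ∨ (y.1 : ℕ) + 1 = x.1) ∧ x.2 = y.2 ∨
      ((x.2 : ℕ) + 1 = y.2 ∨ (y.2 : ℕ) + 1 = x.2) ∧ x.1 = y.1 := by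
  simp only [gridGraph, boxProd_adj, pathGraph_adj]

instance (n m : ℕ) : DecidableRel (gridGraph n m).Adj := fun _ _ =>
  decidable_of_iff' _ gridGraph_adj

section Bootstrap

variable {V : Type*} {G : SimpleGraph V} {r : ℕ}

def IsBootstrapClosed (G : SimpleGraph V) [DecidableRel G.Adj] (r : ℕ) (C : Finset V) : Prop :=
  ∀ v ∉ C, #(C.filter (G.Adj v)) < r

instance [Fintype V] [DecidableEq V] [DecidableRel G.Adj] (C : Finset V) :
    Decidable (IsBootstrapClosed G r C) := by
  unfold IsBootstrapClosed; infer_instance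

theorem Infected.mem_of_isBootstrapClosed [DecidableRel G.Adj] {A : Set V} {C : Finset V}
    (hC : IsBootstrapClosed G r C) (hAC : A ⊆ C) {v : V} (hv : Infected G r A v) : v ∈ C := by
  induction hv with
  | init hv => exact hAC hv
  | step T hT hadj _ ih =>
    by_contra hvC
    refine (hC _ hvC).not_ge (hT.trans (card_le_card fun u hu => ?_))
    exact mem_filter.2 ⟨ih u hu, (hadj u hu).symm⟩

theorem Percolates.exists_mem_notMem [DecidableRel G.Adj] {A : Set V} {C : Finset V}
    (hA : Percolates G r A) (hC : IsBootstrapClosed G r C) {v : V} (hv : v ∉ C) :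
    ∃ a ∈ A, a ∉ C := by
  by_contra! hAC
  exact hv ((hA v).mem_of_isBootstrapClosed hC hAC)

theorem Infected.comap {W : Type*} {H : SimpleGraph W} (f : H ↪g G) {A : Set V} {B : Set W}
    (hf : ∀ w ∉ B, ∀ x, G.Adj x (f w) → x ∈ Set.range f) {x : V} (hx : Infected G r A x) :
    ∀ w, f w = x → Infected H r (f ⁻¹' A ∪ B) w := by
  induction hx with
  | init hx => rintro w rfl; exact .init (Or.inl hx)
  | step T hT hadj _ ih =>
    rintro w rfl
    by_cases hw : w ∈ B
    · exact .init (Or.inr hw)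
    classical
    refine .step (T.preimage f f.injective.injOn) ?_ ?_ ?_
    · rwa [card_preimage, filter_true_of_mem fun u hu => hf w hw u (hadj u hu)]
    · exact fun u hu => f.map_adj_iff.1 (hadj _ (mem_preimage.1 hu))
    · exact fun u hu => ih _ (mem_preimage.1 hu) u rfl

theorem Percolates.comap {W : Type*} {H : SimpleGraph W} (f : H ↪g G) {A : Set V} {B : Set W}
    (hf : ∀ w ∉ B, ∀ x, G.Adj x (f w) → x ∈ Set.range f) (hA : Percolates G r A) :
    Percolates H r (f ⁻¹' A ∪ B) :=
  fun w => (hA (f w)).comap f hf w rfl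

end Bootstrap

theorem card_le_mul_card_of_forall_exists_mem {ι α : Type*} [Fintype ι] [DecidableEq α]
    (U : ι → Finset α) {A : Finset α} {n : ℕ} (hU : ∀ a ∈ A, #{i | a ∈ U i} ≤ n)
    (hA : ∀ i, ∃ a ∈ A, a ∈ U i) :
    Fintype.card ι ≤ n * #A := by
  have := card_mul_le_card_mul (s := univ) (t := A) (fun i a => a ∈ U i) (m := 1)
    (fun i _ => by obtain ⟨a, ha, hai⟩ := hA i; exact card_pos.2 ⟨a, mem_filter.2 ⟨ha, hai⟩⟩)
    (fun a ha => by simpa [bipartiteBelow] using hU a ha)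
  simpa [mul_comm] using this

theorem card_filter_preimage_le {α β : Type*} {f : α → β} (hf : Function.Injective f)
    (s : Finset β) {p : α → Prop} {q : β → Prop} [DecidablePred p] [DecidablePred q]
    (hpq : ∀ a, p a → q (f a)) : #((s.preimage f hf.injOn).filter p) ≤ #(s.filter q) :=
  card_le_card_of_injOn f (fun a ha => by
    simp only [coe_filter, mem_preimage, Set.mem_ofPred_eq] at ha ⊢
    exact ⟨ha.1, hpq a ha.2⟩) hf.injOn

def pathGraphCastLE {k m : ℕ} (h : k ≤ m) : pathGraph k ↪g pathGraph m :=
  ⟨Fin.castLEEmb h, by simp [pathGraph_adj]⟩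

def pathGraphRev (m : ℕ) : pathGraph m ≃g pathGraph m :=
  ⟨Fin.revPerm, by intro a b; simp only [Fin.revPerm_apply, pathGraph_adj, Fin.val_rev]; omega⟩

def pathGraphRevCastLE {k m : ℕ} (h : k ≤ m) : pathGraph k ↪g pathGraph m :=
  (pathGraphCastLE h).trans (pathGraphRev m).toEmbedding

@[simp]
theorem val_pathGraphCastLE {k m : ℕ} (h : k ≤ m) (j : Fin k) :
    (pathGraphCastLE h j : ℕ) = j :=
  rfl

@[simp]
theorem val_pathGraphRevCastLE {k m : ℕ} (h : k ≤ m) (j : Fin k) :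
    (pathGraphRevCastLE h j : ℕ) = m - (j + 1) :=
  rfl

def gridGraphEmbedding {n k m : ℕ} (c : pathGraph k ↪g pathGraph m) :
    gridGraph n k ↪g gridGraph n m where
  toFun w := (w.1, c w.2)
  inj' _ _ h := Prod.ext (Prod.ext_iff.1 h).1 (c.injective (Prod.ext_iff.1 h).2)
  map_rel_iff' {a b} := by
    change (gridGraph n m).Adj (a.1, c a.2) (b.1, c b.2) ↔ _
    simp only [gridGraph, boxProd_adj, c.map_adj_iff, c.injective.eq_iff]

@[simp]
theorem gridGraphEmbedding_apply {n k m : ℕ} (c : pathGraph k ↪g pathGraph m)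
    (w : Fin n × Fin k) : gridGraphEmbedding c w = (w.1, c w.2) :=
  rfl

theorem pathGraphCastLE_neighbor_mem_range {k m : ℕ} (h : k ≤ m) (j : Fin k)
    (hj : (j : ℕ) + 1 ≠ k) (y : Fin m) (hy : (pathGraph m).Adj y (pathGraphCastLE h j)) :
    y ∈ Set.range (pathGraphCastLE h) := by
  rw [pathGraph_adj, val_pathGraphCastLE] at hy
  exact ⟨⟨y, by omega⟩, rfl⟩

theorem pathGraphRevCastLE_neighbor_mem_range {k m : ℕ} (h : k ≤ m) (j : Fin k)
    (hj : (j : ℕ) + 1 ≠ k) (y : Fin m) (hy : (pathGraph m).Adj y (pathGraphRevCastLE h j)) :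
    y ∈ Set.range (pathGraphRevCastLE h) := by
  rw [pathGraph_adj, val_pathGraphRevCastLE] at hy
  exact ⟨⟨m - (y + 1), by omega⟩, Fin.ext (by rw [val_pathGraphRevCastLE, Fin.val_mk]; omega)⟩

theorem Percolates.preimage_gridGraphEmbedding {n k m r : ℕ} {c : pathGraph k ↪g pathGraph m}
    (hc : ∀ j : Fin k, (j : ℕ) + 1 ≠ k → ∀ y, (pathGraph m).Adj y (c j) → y ∈ Set.range c)
    {S : Finset (Fin n × Fin m)} (hS : Percolates (gridGraph n m) r ↑S) :
    Percolates (gridGraph n k) r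
      (↑(S.preimage (gridGraphEmbedding c) (gridGraphEmbedding c).injective.injOn) ∪
        {w | (w.2 : ℕ) + 1 = k}) := by
  rw [coe_preimage]
  refine hS.comap _ fun w hw x hx => ?_
  simp only [gridGraph, boxProd_adj] at hx
  rcases hx with ⟨-, hx2⟩ | ⟨hx2, hx1⟩
  · exact ⟨(x.1, w.2), Prod.ext rfl hx2.symm⟩
  · obtain ⟨j, hj⟩ := hc w.2 hw x.2 hx2
    exact ⟨(w.1, j), Prod.ext hx1.symm hj⟩

def firstColumnBlockers : Fin 3 → Finset (Fin 5 × Fin 3) :=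
  ![{(0, 0)}, {(4, 0)}, {(1, 0), (2, 0)}]

-- The repetitions make this a fractional packing of weight `9 / 2`.
def twoColumnBlockers : Fin 9 → Finset (Fin 5 × Fin 3) :=
  ![{(0, 0)}, {(0, 0)}, {(4, 0)}, {(4, 0)}, {(0, 1), (1, 0), (1, 1)}, {(0, 1), (1, 0), (1, 1)},
    {(2, 0), (3, 0)}, {(2, 0), (2, 1), (3, 1), (4, 1)}, {(3, 0), (3, 1), (4, 1)}]

theorem isBootstrapClosed_compl_firstColumnBlockers (i : Fin 3) :
    IsBootstrapClosed (gridGraph 5 3) 3 (firstColumnBlockers i)ᶜ := by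
  revert i; decide

theorem isBootstrapClosed_compl_twoColumnBlockers (i : Fin 9) :
    IsBootstrapClosed (gridGraph 5 3) 3 (twoColumnBlockers i)ᶜ := by
  revert i; decide

theorem card_mem_firstColumnBlockers_le (a : Fin 5 × Fin 3) :
    #{i | a ∈ firstColumnBlockers i} ≤ 1 := by
  revert a; decide

theorem card_mem_twoColumnBlockers_le (a : Fin 5 × Fin 3) :
    #{i | a ∈ twoColumnBlockers i} ≤ 2 := by
  revert a; decide

theorem le_card_filter_of_percolates_gridGraph_five_three (A : Finset (Fin 5 × Fin 3))
    (hA : Percolates (gridGraph 5 3) 3 (↑A ∪ {w | (w.2 : ℕ) + 1 = 3})) :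
    3 ≤ #(A.filter fun w => (w.2 : ℕ) = 0) ∧ 5 ≤ #(A.filter fun w => (w.2 : ℕ) ≤ 1) := by
  have meets (p : Fin 5 × Fin 3 → Prop) [DecidablePred p] (U : Finset (Fin 5 × Fin 3))
      (hU : IsBootstrapClosed (gridGraph 5 3) 3 Uᶜ) (hne : U.Nonempty)
      (hUp : ∀ w ∈ U, p w ∧ (w.2 : ℕ) ≤ 1) : ∃ a ∈ A.filter p, a ∈ U := by
    obtain ⟨u, hu⟩ := hne
    obtain ⟨a, ha, haU⟩ := hA.exists_mem_notMem hU (notMem_compl.2 hu)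
    rw [mem_compl, not_not] at haU
    obtain ⟨hpa, ha2⟩ := hUp a haU
    refine ⟨a, mem_filter.2 ⟨ha.resolve_right ?_, hpa⟩, haU⟩
    simp only [Set.mem_ofPred_eq]; omega
  constructor
  · have := card_le_mul_card_of_forall_exists_mem firstColumnBlockers (n := 1)
      (fun a _ => card_mem_firstColumnBlockers_le a) fun i => meets (fun w => (w.2 : ℕ) = 0) _
        (isBootstrapClosed_compl_firstColumnBlockers i) (by revert i; decide) (by revert i; decide)
    simpa using this
  · have := card_le_mul_card_of_forall_exists_mem twoColumnBlockers (n := 2)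
      (fun a _ => card_mem_twoColumnBlockers_le a) fun i => meets (fun w => (w.2 : ℕ) ≤ 1) _
        (isBootstrapClosed_compl_twoColumnBlockers i) (by revert i; decide) (by revert i; decide)
    simp only [Fintype.card_fin] at this
    omega

theorem stmt_11_general (m : ℕ) (hm : 5 ≤ m) (S : Finset (Fin 5 × Fin m))
    (hperc : Percolates (gridGraph 5 m) 3 (↑S)) :
    3 ≤ (S.filter (fun v => (v.2 : ℕ) = 0)).card ∧
    5 ≤ (S.filter (fun v => (v.2 : ℕ) ≤ 1)).card ∧
    3 ≤ (S.filter (fun v => (v.2 : ℕ) = m - 1)).card ∧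
    5 ≤ (S.filter (fun v => m - 2 ≤ (v.2 : ℕ))).card := by
  have h3 : 3 ≤ m := by omega
  obtain ⟨hL0, hL1⟩ := le_card_filter_of_percolates_gridGraph_five_three _
    (hperc.preimage_gridGraphEmbedding (pathGraphCastLE_neighbor_mem_range h3))
  obtain ⟨hR0, hR1⟩ := le_card_filter_of_percolates_gridGraph_five_three _
    (hperc.preimage_gridGraphEmbedding (pathGraphRevCastLE_neighbor_mem_range h3))
  refine ⟨hL0.trans ?_, hL1.trans ?_, hR0.trans ?_, hR1.trans ?_⟩ <;>
  · refine card_filter_preimage_le (RelEmbedding.injective _) _ fun w hw => ?_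
    simp only [gridGraphEmbedding_apply, val_pathGraphCastLE, val_pathGraphRevCastLE] at hw ⊢
    omega

theorem stmt_11 (m : ℕ) (hm : 5 ≤ m) (S : Finset (Fin 5 × Fin m))
    (hmin : S.card = percNum (Fin 5 × Fin m) (gridGraph 5 m) 3)
    (hperc : Percolates (gridGraph 5 m) 3 (↑S))
    (hcons : (¬ ∃ u v z, u ∈ S ∧ v ∈ S ∧ z ∈ S ∧
      (gridGraph 5 m).Adj u v ∧ (gridGraph 5 m).Adj v z ∧ u ≠ z ∧
      IsBoundary (gridGraph 5 m) u ∧ IsBoundary (gridGraph 5 m) v ∧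
      IsBoundary (gridGraph 5 m) z)) :
    3 ≤ (S.filter (fun v => (v.2 : ℕ) = 0)).card ∧
    5 ≤ (S.filter (fun v => (v.2 : ℕ) ≤ 1)).card ∧
    3 ≤ (S.filter (fun v => (v.2 : ℕ) = m - 1)).card ∧
    5 ≤ (S.filter (fun v => m - 2 ≤ (v.2 : ℕ))).card :=
  stmt_11_general m hm S hperc
end

section
/- For m ≥ 4, the 3-percolation number of the grid P₄ □ Pₘ is at least ⌊5(m+1)/3⌋ + 1. -/
/-!
Every vertex infected in `r`-neighbour bootstrap percolation has at least `r` previously infected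
neighbours, so infecting it adds at least `r` edges to the subgraph induced by the infected set.
Hence `r · (|V| - |A|) ≤ e(G) - e(A)` for every percolating set `A`. The grid `P₄ □ Pₘ` has
`7m - 4` edges, and a percolating set contains an edge in each end column, so `e(A) ≥ 2`: the
corners of such a column have degree `2`, and of its two middle vertices (of degree `3`) the first
one to be infected would need the other one. With `r = 3` this gives `3|A| ≥ 5m + 6`.
-/

open SimpleGraph

open Finset

section Bootstrap

variable {V : Type*} [Fintype V] {G : SimpleGraph V} [DecidableRel G.Adj] {r : ℕ} {A : Set V}

lemma mem_of_le_card_of_degree_le {T : Finset V} {u v : V} (hT : r ≤ #T)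
    (hTv : ∀ u ∈ T, G.Adj u v) (hv : G.degree v ≤ r) (huv : G.Adj u v) : u ∈ T := by
  have hsub : T ⊆ G.neighborFinset v := fun u hu => (mem_neighborFinset _ _ _).2 (hTv u hu).symm
  rw [eq_of_subset_of_card_le hsub (by rw [card_neighborFinset_eq_degree]; omega)]
  exact (mem_neighborFinset _ _ _).2 huv.symm

lemma Infected.mem_of_degree_lt {v : V} (h : Infected G r A v) (hv : G.degree v < r) : v ∈ A := by
  cases h with
  | init hvA => exact hvA
  | step T hT hTv _ =>
    have hsub : T ⊆ G.neighborFinset v := fun u hu => (mem_neighborFinset _ _ _).2 (hTv u hu).symm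
    have := card_le_card hsub
    rw [card_neighborFinset_eq_degree] at this
    omega

/-- Of two adjacent vertices of degree at most `r`, the one infected first needs the other. -/
lemma Infected.mem_or_mem_of_adj {p q : V} (h : Infected G r A p) (hpq : G.Adj p q)
    (hp : G.degree p ≤ r) (hq : G.degree q ≤ r) : p ∈ A ∨ q ∈ A := by
  suffices key : ∀ v, Infected G r A v → v = p ∨ v = q → p ∈ A ∨ q ∈ A from
    key p h (.inl rfl)
  intro v hv
  induction hv with
  | init hvA => rintro (rfl | rfl) <;> simp [hvA]
  | step T hT hTv _ ih =>
    rintro (rfl | rfl)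
    · exact ih q (mem_of_le_card_of_degree_le hT hTv hp hpq.symm) (.inr rfl)
    · exact ih p (mem_of_le_card_of_degree_le hT hTv hq hpq) (.inl rfl)

variable [DecidableEq V]

variable (G) in
/-- Twice the number of edges of `G` with both ends in `B`. -/
def innerDegreeSum (B : Finset V) : ℕ := ∑ v ∈ B, #(G.neighborFinset v ∩ B)

lemma innerDegreeSum_insert {B : Finset V} {w : V} (hw : w ∉ B) :
    innerDegreeSum G (insert w B) = innerDegreeSum G B + 2 * #(G.neighborFinset w ∩ B) := by
  have hcard (v : V) : #(G.neighborFinset v ∩ insert w B) =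
      #(G.neighborFinset v ∩ B) + if G.Adj w v then 1 else 0 := by
    by_cases hwv : G.Adj w v
    · rw [inter_insert_of_mem (by simpa using hwv.symm),
        card_insert_of_notMem fun h => hw (mem_inter.1 h).2, if_pos hwv]
    · rw [inter_insert_of_notMem (by simpa [adj_comm] using hwv), if_neg hwv, add_zero]
  have hcount : ∑ v ∈ B, (if G.Adj w v then 1 else 0) = #(G.neighborFinset w ∩ B) := by
    rw [sum_boole, Nat.cast_id, inter_comm, ← filter_mem_eq_inter]
    simp
  rw [innerDegreeSum, sum_insert hw, inter_insert_of_notMem (G.notMem_neighborFinset_self w),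
    sum_congr rfl fun v _ => hcard v, sum_add_distrib, hcount, innerDegreeSum]
  ring

lemma innerDegreeSum_univ : innerDegreeSum G univ = ∑ v, G.degree v := by
  simp [innerDegreeSum]

lemma card_le_innerDegreeSum {S B : Finset V} (hSB : S ⊆ B)
    (hS : ∀ v ∈ S, ∃ u ∈ B, G.Adj v u) : #S ≤ innerDegreeSum G B :=
  calc #S ≤ ∑ v ∈ S, #(G.neighborFinset v ∩ B) := by
        have hpos : ∀ v ∈ S, 1 ≤ #(G.neighborFinset v ∩ B) := fun v hv => by
          obtain ⟨u, huB, hvu⟩ := hS v hv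
          exact card_pos.2 ⟨u, mem_inter.2 ⟨(mem_neighborFinset _ _ _).2 hvu, huB⟩⟩
        simpa using card_nsmul_le_sum S _ 1 hpos
    _ ≤ innerDegreeSum G B := sum_le_sum_of_subset hSB

lemma Infected.exists_notMem_le_card_neighborFinset_inter {B : Finset V} {v : V}
    (h : Infected G r A v) (hAB : A ⊆ B) (hv : v ∉ B) :
    ∃ w ∉ B, r ≤ #(G.neighborFinset w ∩ B) := by
  induction h with
  | init hvA => exact absurd (hAB hvA) hv
  | @step v T hT hadj _ ih =>
    by_cases hTB : T ⊆ B
    · refine ⟨v, hv, hT.trans (card_le_card fun u hu => ?_)⟩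
      exact mem_inter.2 ⟨(mem_neighborFinset _ _ _).2 (hadj u hu).symm, hTB hu⟩
    · obtain ⟨u, huT, huB⟩ := not_subset.1 hTB
      exact ih u huT huB

theorem Percolates.two_mul_card_add_innerDegreeSum_le {A : Finset V} (hA : Percolates G r A) :
    2 * r * Fintype.card V + innerDegreeSum G A ≤ 2 * r * #A + ∑ v, G.degree v := by
  suffices key : ∀ n, ∀ B : Finset V, A ⊆ B → #Bᶜ = n →
      2 * r * Fintype.card V + innerDegreeSum G B ≤ 2 * r * #B + ∑ v, G.degree v from
    key _ A Subset.rfl rfl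
  intro n
  induction n with
  | zero =>
    intro B _ hB
    rw [card_eq_zero, compl_eq_empty_iff] at hB
    simp [hB, innerDegreeSum_univ]
  | succ n ih =>
    intro B hAB hB
    obtain ⟨v, hv⟩ := card_pos.1 (by omega : 0 < #Bᶜ)
    obtain ⟨w, hwB, hw⟩ :=
      (hA v).exists_notMem_le_card_neighborFinset_inter (coe_subset.2 hAB) (mem_compl.1 hv)
    have hstep := ih (insert w B) (hAB.trans (subset_insert w B)) <| by
      rw [compl_insert, card_erase_of_mem (mem_compl.2 hwB), hB, Nat.add_sub_cancel]
    rw [innerDegreeSum_insert hwB, card_insert_of_notMem hwB] at hstep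
    nlinarith

end Bootstrap

lemma le_percNum {V : Type*} [Fintype V] {G : SimpleGraph V} {r k : ℕ}
    (h : ∀ A : Finset V, Percolates G r A → k ≤ #A) : k ≤ percNum V G r :=
  le_csInf ⟨_, univ, rfl, fun _ => .init (mem_univ _)⟩ fun _ ⟨A, hcard, hA⟩ =>
    hcard ▸ h A hA

section Grid

open Classical

lemma degree_pathGraph_le_two {n : ℕ} (j : Fin n) : (pathGraph n).degree j ≤ 2 := by
  rw [← card_neighborFinset_eq_degree]
  calc #((pathGraph n).neighborFinset j) ≤ #({j.val - 1, j.val + 1} : Finset ℕ) := by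
        refine card_le_card_of_injOn Fin.val (fun u hu => ?_) Fin.val_injective.injOn
        simp only [coe_neighborFinset, mem_neighborSet, pathGraph_adj, coe_insert, coe_singleton,
          Set.mem_insert_iff, Set.mem_singleton_iff] at hu ⊢
        omega
    _ ≤ 2 := card_le_two

lemma degree_pathGraph_le_one {n : ℕ} {j : Fin n} (hj : j.val = 0 ∨ j.val + 1 = n) :
    (pathGraph n).degree j ≤ 1 := by
  rw [← card_neighborFinset_eq_degree, card_le_one]
  intro a ha b hb
  simp only [mem_neighborFinset, pathGraph_adj] at ha hb
  omega

lemma sum_degree_pathGraph_le (k : ℕ) :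
    ∑ j : Fin (k + 2), (pathGraph (k + 2)).degree j ≤ 2 * k + 2 := by
  rw [Fin.sum_univ_succ, Fin.sum_univ_castSucc]
  have hfirst := degree_pathGraph_le_one (j := (0 : Fin (k + 2))) (.inl rfl)
  have hlast := degree_pathGraph_le_one (n := k + 2) (j := (Fin.last k).succ) (.inr rfl)
  have hinner := sum_le_card_nsmul univ
    (fun i : Fin k => (pathGraph (k + 2)).degree i.castSucc.succ) 2 fun i _ =>
      degree_pathGraph_le_two _
  simp only [card_univ, Fintype.card_fin, smul_eq_mul] at hinner
  omega

lemma sum_degree_boxProd {α β : Type*} [Fintype α] [Fintype β] (G : SimpleGraph α)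
    (H : SimpleGraph β) :
    ∑ x, (G □ H).degree x =
      Fintype.card β * ∑ a, G.degree a + Fintype.card α * ∑ b, H.degree b := by
  -- Abstracting the degrees keeps `simp` away from the `Fintype` instances inside them.
  have hsplit (f : α → ℕ) (g : β → ℕ) : ∑ x : α × β, (f x.1 + g x.2) =
      Fintype.card β * ∑ a, f a + Fintype.card α * ∑ b, g b := by
    rw [sum_add_distrib, Fintype.sum_prod_type, Fintype.sum_prod_type_right]
    simp [mul_sum]
  rw [sum_congr rfl fun x _ => degree_boxProd x]
  exact hsplit (fun a => G.degree a) (fun b => H.degree b)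

lemma sum_degree_gridGraph_le (k : ℕ) :
    ∑ x, (gridGraph 4 (k + 2)).degree x ≤ 14 * k + 20 := by
  have hsum : ∑ x, (gridGraph 4 (k + 2)).degree x =
      (k + 2) * ∑ i, (pathGraph 4).degree i + 4 * ∑ j, (pathGraph (k + 2)).degree j := by
    convert sum_degree_boxProd (pathGraph 4) (pathGraph (k + 2)) using 3 <;> simp [gridGraph]
  have h4 := sum_degree_pathGraph_le 2
  have hm := sum_degree_pathGraph_le k
  rw [hsum]
  nlinarith

lemma Percolates.exists_adj_mem_of_degree_le_one {m : ℕ} {A : Finset (Fin 4 × Fin m)}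
    (hA : Percolates (gridGraph 4 m) 3 A) {j : Fin m} (hj : (pathGraph m).degree j ≤ 1) :
    ∃ p ∈ A, ∃ q ∈ A, p.2 = j ∧ q.2 = j ∧ (gridGraph 4 m).Adj p q := by
  have hdeg (i : Fin 4) :
      (gridGraph 4 m).degree (i, j) = (pathGraph 4).degree i + (pathGraph m).degree j := by
    convert degree_boxProd (G := pathGraph 4) (H := pathGraph m) (i, j)
    rfl
  have hadj (i i' : Fin 4) (h : i.val + 1 = i'.val) : (gridGraph 4 m).Adj (i, j) (i', j) :=
    .inl ⟨pathGraph_adj.2 (.inl h), rfl⟩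
  have hcorner (i : Fin 4) (hi : i.val = 0 ∨ i.val + 1 = 4) : (i, j) ∈ A := by
    refine (hA _).mem_of_degree_lt ?_
    have := degree_pathGraph_le_one hi
    rw [hdeg]
    omega
  have hmiddle (i : Fin 4) : (gridGraph 4 m).degree (i, j) ≤ 3 := by
    have := degree_pathGraph_le_two i
    rw [hdeg]
    omega
  rcases (hA _).mem_or_mem_of_adj (hadj 1 2 rfl) (hmiddle 1) (hmiddle 2) with h | h
  · exact ⟨(0, j), hcorner 0 (.inl rfl), (1, j), h, rfl, rfl, hadj 0 1 rfl⟩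
  · exact ⟨(2, j), h, (3, j), hcorner 3 (.inr rfl), rfl, rfl, hadj 2 3 rfl⟩

lemma Percolates.four_le_innerDegreeSum {k : ℕ} {A : Finset (Fin 4 × Fin (k + 2))}
    (hA : Percolates (gridGraph 4 (k + 2)) 3 A) : 4 ≤ innerDegreeSum (gridGraph 4 (k + 2)) A := by
  obtain ⟨p, hp, q, hq, hp2, hq2, hpq⟩ :=
    hA.exists_adj_mem_of_degree_le_one (j := 0) (degree_pathGraph_le_one (.inl rfl))
  obtain ⟨r, hr, s, hs, hr2, hs2, hrs⟩ :=
    hA.exists_adj_mem_of_degree_le_one (j := Fin.last _) (degree_pathGraph_le_one (.inr rfl))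
  have hdisj : Disjoint ({p, q} : Finset _) {r, s} := by
    refine disjoint_left.2 fun x hxpq hxrs => (Fin.last_pos (n := k)).ne ?_
    simp only [mem_insert, mem_singleton] at hxpq hxrs
    obtain ⟨h0, hlast⟩ : x.2 = 0 ∧ x.2 = Fin.last _ := by
      constructor
      · rcases hxpq with rfl | rfl <;> assumption
      · rcases hxrs with rfl | rfl <;> assumption
    rw [← h0, hlast]
  calc 4 = #({p, q} ∪ {r, s}) := by
        rw [card_union_of_disjoint hdisj, card_pair hpq.ne, card_pair hrs.ne]
    _ ≤ innerDegreeSum (gridGraph 4 (k + 2)) A := by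
        refine card_le_innerDegreeSum (by simp [insert_subset_iff, *]) ?_
        simp only [mem_union, mem_insert, mem_singleton]
        rintro v ((rfl | rfl) | (rfl | rfl))
        exacts [⟨q, hq, hpq⟩, ⟨p, hp, hpq.symm⟩, ⟨s, hs, hrs⟩, ⟨r, hr, hrs.symm⟩]

end Grid

theorem stmt_17 (m : ℕ) (hm : 4 ≤ m) :
    5 * (m + 1) / 3 + 1 ≤ percNum (Fin 4 × Fin m) (gridGraph 4 m) 3 := by
  classical
  obtain ⟨k, rfl⟩ : ∃ k, m = k + 2 := ⟨m - 2, by omega⟩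
  refine le_percNum fun A hA => ?_
  have hcount := hA.two_mul_card_add_innerDegreeSum_le
  have hedges := sum_degree_gridGraph_le k
  have hinner := hA.four_le_innerDegreeSum
  rw [Fintype.card_prod, Fintype.card_fin, Fintype.card_fin] at hcount
  omega
end
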